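/- arXiv:1502.01635 — 3 statements merged into one kernel-verified Lean document; each statement's English description precedes it below -/
import Mathlib

section
/- Let Ω ⊆ ℝⁿ be a bounded domain with C² boundary and let 𝒟 denote the Dirichlet–Neumann operator on ∂Ω: for smooth f on ∂Ω, 𝒟f = ∂u/∂ν on ∂Ω, where u is the harmonic extension of f to Ω and ν is the exterior unit normal. Then for every positive integer m ≥ 1 and every smooth f : ∂Ω → ℝ, the pointwise inequality (1/(2m)) 𝒟(f^{2m})(x) ≤ f(x)^{2m−1} · 𝒟f(x) holds for all x ∈ ∂Ω. -/
/-!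
For even `k` and harmonic `u`, `Δ(u ^ k) = k(k-1) u ^ (k-2) |∇u|² ≥ 0`, so `w = v - u ^ (2m)` is
superharmonic in `Ω` and vanishes on `∂Ω`. By the weak minimum principle `w ≥ 0` in `Ω`: an
interior minimum of `w - ε|x|²` is impossible, since there the second derivative test along the
coordinate axes gives `Δ ≥ 0`, whereas `Δ(w - ε|x|²) ≤ -2nε < 0`. Hence `w`, which vanishes at a
boundary point `x` and is nonnegative just inside along `-ν x`, has one-sided normal derivative
`𝒟(f^{2m})(x) - 2m f(x)^{2m-1} 𝒟f(x) ≤ 0`.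
-/

open MeasureTheory

/-- The (ordinary) Laplacian `Δf(x) = Σ_j ∂²f/∂x_j²(x)` on `ℝⁿ = EuclideanSpace ℝ (Fin n)`. -/
noncomputable def laplacian {n : ℕ} (f : EuclideanSpace ℝ (Fin n) → ℝ)
    (x : EuclideanSpace ℝ (Fin n)) : ℝ :=
  ∑ i : Fin n, iteratedFDeriv ℝ 2 f x ![EuclideanSpace.single i 1, EuclideanSpace.single i 1]

open Filter Topology Set

theorem IsLocalMin.deriv_deriv_nonneg {g : ℝ → ℝ} {a : ℝ} (hmin : IsLocalMin g a)
    (hg : ContinuousAt g a) : 0 ≤ deriv (deriv g) a := by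
  by_contra! hneg
  -- A negative second derivative would make `a` a local maximum as well, so `g` is locally
  -- constant and its second derivative vanishes.
  have hmax : IsLocalMax g a := isLocalMax_of_deriv_deriv_neg hneg hmin.deriv_eq_zero hg
  have hconst : g =ᶠ[𝓝 a] fun _ => g a :=
    (hmin.and hmax).mono fun t ht => le_antisymm ht.2 ht.1
  have hderiv : deriv g =ᶠ[𝓝 a] fun _ => 0 :=
    hconst.eventually_nhds.mono fun t (ht : g =ᶠ[𝓝 t] fun _ => g a) => by
      rw [ht.deriv_eq, deriv_const]
  simp [hderiv.deriv_eq] at hneg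

theorem IsLocalMinOn.hasDerivWithinAt_Iic_nonpos {g : ℝ → ℝ} {a d : ℝ}
    (hmin : IsLocalMinOn g (Iic a) a) (hg : HasDerivWithinAt g d (Iic a) a) : d ≤ 0 := by
  have hcone : (-1 : ℝ) ∈ posTangentConeAt (Iic a) a :=
    mem_posTangentConeAt_of_segment_subset (by simp [segment_eq_Icc', Icc_subset_Iic_self])
  simpa using hmin.hasFDerivWithinAt_nonneg hg.hasFDerivWithinAt hcone

section SecondDerivative

variable {E : Type*} [NormedAddCommGroup E] [NormedSpace ℝ E]

theorem hasDerivAt_add_smul (x e : E) (t : ℝ) : HasDerivAt (fun s : ℝ => x + s • e) e t := by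
  simpa using ((hasDerivAt_id t).smul_const e).const_add x

theorem hasDerivAt_comp_add_smul {F : Type*} [NormedAddCommGroup F] [NormedSpace ℝ F]
    {g : E → F} {x e : E} {t : ℝ} (hg : DifferentiableAt ℝ g (x + t • e)) :
    HasDerivAt (fun s : ℝ => g (x + s • e)) (fderiv ℝ g (x + t • e) e) t :=
  hg.hasFDerivAt.comp_hasDerivAt t (hasDerivAt_add_smul x e t)

theorem ContDiffAt.deriv_deriv_comp_add_smul {f : E → ℝ} {x : E} (hf : ContDiffAt ℝ 2 f x)
    (e : E) : deriv (deriv fun t : ℝ => f (x + t • e)) 0 = fderiv ℝ (fderiv ℝ f) x e e := by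
  have hline : Tendsto (fun t : ℝ => x + t • e) (𝓝 0) (𝓝 x) := by
    simpa using (hasDerivAt_add_smul x e 0).continuousAt.tendsto
  have hfirst : deriv (fun t : ℝ => f (x + t • e)) =ᶠ[𝓝 0] fun t => fderiv ℝ f (x + t • e) e :=
    (hline.eventually (hf.eventually (by simp))).mono fun t ht =>
      (hasDerivAt_comp_add_smul (ht.differentiableAt (by simp))).deriv
  have hf' : DifferentiableAt ℝ (fderiv ℝ f) (x + (0:ℝ) • e) := by
    simpa using (hf.fderiv_right (m := 1) (by norm_num)).differentiableAt (by simp)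
  rw [hfirst.deriv_eq]
  simpa using ((hasDerivAt_comp_add_smul hf').clm_apply (hasDerivAt_const 0 e)).deriv

theorem IsLocalMin.fderiv_fderiv_apply_self_nonneg {f : E → ℝ} {x : E} (hmin : IsLocalMin f x)
    (hf : ContDiffAt ℝ 2 f x) (e : E) : 0 ≤ fderiv ℝ (fderiv ℝ f) x e e := by
  have hline := (hasDerivAt_add_smul x e 0).continuousAt
  have hx : x + (0:ℝ) • e = x := by simp
  rw [← hf.deriv_deriv_comp_add_smul e]
  refine IsLocalMin.deriv_deriv_nonneg ?_ ?_
  · exact IsLocalMin.comp_continuous (f := f) (by rwa [hx]) hline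
  · exact ContinuousAt.comp (g := f) (by rw [hx]; exact hf.continuousAt) hline

theorem ContDiffAt.fderiv_fderiv_pow_apply {u : E → ℝ} {x : E} (hu : ContDiffAt ℝ 2 u x)
    (k : ℕ) (e : E) :
    fderiv ℝ (fderiv ℝ fun z => u z ^ k) x e e =
      ((k * (k - 1) : ℕ) : ℝ) * u x ^ (k - 2) * fderiv ℝ u x e ^ 2
        + k * u x ^ (k - 1) * fderiv ℝ (fderiv ℝ u) x e e := by
  have hfirst : fderiv ℝ (fun z => u z ^ k) =ᶠ[𝓝 x]
      (fun y => (k * u y ^ (k - 1)) • fderiv ℝ u y) :=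
    (hu.eventually (by simp)).mono fun y hy => by
      simpa using ((hy.differentiableAt (by simp)).hasFDerivAt.pow k).fderiv
  have hcoeff : HasFDerivAt (fun y => k * u y ^ (k - 1))
      ((k * ((k - 1 : ℕ) * u x ^ (k - 1 - 1))) • fderiv ℝ u x) x := by
    simpa [smul_smul] using
      (((hu.differentiableAt (by simp)).hasFDerivAt.pow (k - 1)).const_mul (k : ℝ))
  have hsecond : HasFDerivAt (fderiv ℝ u) (fderiv ℝ (fderiv ℝ u) x) x :=
    ((hu.fderiv_right (m := 1) (by norm_num)).differentiableAt (by simp)).hasFDerivAt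
  rw [(hcoeff.smul hsecond).congr_of_eventuallyEq hfirst |>.fderiv]
  simp only [add_apply, smul_apply, ContinuousLinearMap.smulRight_apply, smul_eq_mul, Nat.sub_sub]
  push_cast
  ring

end SecondDerivative

section Laplacian

variable {n : ℕ}

theorem laplacian_eq_sum_fderiv_fderiv (f : EuclideanSpace ℝ (Fin n) → ℝ)
    (x : EuclideanSpace ℝ (Fin n)) :
    laplacian f x = ∑ i, fderiv ℝ (fderiv ℝ f) x (EuclideanSpace.single i 1)
      (EuclideanSpace.single i 1) := by
  simp [laplacian, iteratedFDeriv_two_apply]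

theorem laplacian_fun_sub {f g : EuclideanSpace ℝ (Fin n) → ℝ} {x : EuclideanSpace ℝ (Fin n)}
    (hf : ContDiffAt ℝ 2 f x) (hg : ContDiffAt ℝ 2 g x) :
    laplacian (fun z => f z - g z) x = laplacian f x - laplacian g x := by
  simp only [laplacian, ← Pi.sub_def, iteratedFDeriv_sub_apply hf hg, Finset.sum_sub_distrib,
    sub_apply]

theorem laplacian_const_mul {f : EuclideanSpace ℝ (Fin n) → ℝ} {x : EuclideanSpace ℝ (Fin n)}
    (c : ℝ) (hf : ContDiffAt ℝ 2 f x) : laplacian (fun z => c * f z) x = c * laplacian f x := by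
  simp only [laplacian, ← smul_eq_mul (a := c), ← Pi.smul_def, iteratedFDeriv_const_smul_apply hf,
    smul_apply, Finset.smul_sum]

theorem laplacian_norm_sq (x : EuclideanSpace ℝ (Fin n)) :
    laplacian (fun z => ‖z‖ ^ 2) x = 2 * n := by
  rw [laplacian_eq_sum_fderiv_fderiv, fderiv_norm_sq, ← FunLike.coe_smul,
    ContinuousLinearMap.fderiv]
  simp only [smul_apply, innerSL_apply_apply ℝ]
  simp [mul_comm]

theorem IsLocalMin.laplacian_nonneg {f : EuclideanSpace ℝ (Fin n) → ℝ}
    {x : EuclideanSpace ℝ (Fin n)} (hmin : IsLocalMin f x) (hf : ContDiffAt ℝ 2 f x) :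
    0 ≤ laplacian f x := by
  rw [laplacian_eq_sum_fderiv_fderiv]
  exact Finset.sum_nonneg fun i _ => hmin.fderiv_fderiv_apply_self_nonneg hf _

theorem laplacian_pow_nonneg_of_even {u : EuclideanSpace ℝ (Fin n) → ℝ}
    {x : EuclideanSpace ℝ (Fin n)} (hu : ContDiffAt ℝ 2 u x) (hharm : laplacian u x = 0)
    {k : ℕ} (hk : Even k) : 0 ≤ laplacian (fun z => u z ^ k) x := by
  have hpow : 0 ≤ u x ^ (k - 2) := (hk.tsub even_two).pow_nonneg _
  rw [laplacian_eq_sum_fderiv_fderiv]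
  simp only [hu.fderiv_fderiv_pow_apply, Finset.sum_add_distrib, ← Finset.mul_sum,
    ← laplacian_eq_sum_fderiv_fderiv, hharm, mul_zero, add_zero]
  positivity

end Laplacian

section MinimumPrinciple

variable {n : ℕ} {Ω : Set (EuclideanSpace ℝ (Fin n))}

theorem exists_mem_frontier_isMinOn_of_laplacian_neg (hΩopen : IsOpen Ω)
    (hΩbdd : Bornology.IsBounded Ω) (hΩne : Ω.Nonempty) {w : EuclideanSpace ℝ (Fin n) → ℝ}
    (hcont : ContinuousOn w (closure Ω)) (hreg : ContDiffOn ℝ 2 w Ω)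
    (hneg : ∀ x ∈ Ω, laplacian w x < 0) : ∃ x₀ ∈ frontier Ω, IsMinOn w (closure Ω) x₀ := by
  obtain ⟨x₀, hx₀, hmin⟩ :=
    hΩbdd.isCompact_closure.exists_isMinOn hΩne.closure hcont
  refine ⟨x₀, ?_, hmin⟩
  rw [hΩopen.frontier_eq]
  refine ⟨hx₀, fun hx₀Ω => ?_⟩
  have hlocal : IsLocalMin w x₀ :=
    hmin.isLocalMin (mem_of_superset (hΩopen.mem_nhds hx₀Ω) subset_closure)
  exact (hneg x₀ hx₀Ω).not_ge (hlocal.laplacian_nonneg (hreg.contDiffAt (hΩopen.mem_nhds hx₀Ω)))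

theorem nonneg_of_laplacian_nonpos (hn : n ≠ 0) (hΩopen : IsOpen Ω)
    (hΩbdd : Bornology.IsBounded Ω) {w : EuclideanSpace ℝ (Fin n) → ℝ}
    (hcont : ContinuousOn w (closure Ω)) (hreg : ContDiffOn ℝ 2 w Ω)
    (hsuper : ∀ x ∈ Ω, laplacian w x ≤ 0) (hbd : ∀ x ∈ frontier Ω, 0 ≤ w x) :
    ∀ y ∈ Ω, 0 ≤ w y := by
  intro y hy
  obtain ⟨R, hR⟩ := isBounded_iff_forall_norm_le.1 hΩbdd.closure
  refine le_of_forall_pos_le_add fun δ hδ => ?_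
  -- chosen so that `ε‖z‖² ≤ δ` on `closure Ω`
  set ε := δ / (R ^ 2 + 1) with hε
  have hεpos : 0 < ε := by positivity
  have hεR : ε * R ^ 2 ≤ δ := by
    rw [hε, div_mul_eq_mul_div, div_le_iff₀ (by positivity)]
    nlinarith
  have hneg : ∀ x ∈ Ω, laplacian (fun z => w z - ε * ‖z‖ ^ 2) x < 0 := fun x hx => by
    have hw := hreg.contDiffAt (hΩopen.mem_nhds hx)
    have hnorm : ContDiffAt ℝ 2 (fun z : EuclideanSpace ℝ (Fin n) => ‖z‖ ^ 2) x :=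
      (contDiff_norm_sq ℝ).contDiffAt
    rw [laplacian_fun_sub hw (contDiffAt_const.mul hnorm), laplacian_const_mul ε hnorm,
      laplacian_norm_sq]
    have hn_pos : (0 : ℝ) < n := by exact_mod_cast Nat.pos_of_ne_zero hn
    nlinarith [hsuper x hx]
  obtain ⟨x₀, hx₀, hmin⟩ :=
    exists_mem_frontier_isMinOn_of_laplacian_neg (w := fun z => w z - ε * ‖z‖ ^ 2)
      hΩopen hΩbdd ⟨y, hy⟩
      (hcont.sub (continuousOn_const.mul (continuous_norm.pow 2).continuousOn))
      (hreg.sub (contDiffOn_const.mul (contDiff_norm_sq ℝ).contDiffOn)) hneg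
  have hx₀R : ‖x₀‖ ^ 2 ≤ R ^ 2 :=
    pow_le_pow_left₀ (norm_nonneg _) (hR x₀ (frontier_subset_closure hx₀)) 2
  have hmin_y := isMinOn_iff.1 hmin y (subset_closure hy)
  linarith [hbd x₀ hx₀, mul_le_mul_of_nonneg_left hx₀R hεpos.le,
    mul_nonneg hεpos.le (sq_nonneg ‖y‖)]

theorem pow_le_of_laplacian_eq_zero (hn : n ≠ 0) (hΩopen : IsOpen Ω)
    (hΩbdd : Bornology.IsBounded Ω) {k : ℕ} (hk : Even k) {u v : EuclideanSpace ℝ (Fin n) → ℝ}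
    (hucont : ContinuousOn u (closure Ω)) (hvcont : ContinuousOn v (closure Ω))
    (hureg : ContDiffOn ℝ 2 u Ω) (hvreg : ContDiffOn ℝ 2 v Ω)
    (huharm : ∀ x ∈ Ω, laplacian u x = 0) (hvharm : ∀ x ∈ Ω, laplacian v x = 0)
    (hbd : ∀ x ∈ frontier Ω, v x = u x ^ k) : ∀ x ∈ Ω, u x ^ k ≤ v x := by
  have hsuper : ∀ x ∈ Ω, laplacian (fun z => v z - u z ^ k) x ≤ 0 := fun x hx => by
    have hu := hureg.contDiffAt (hΩopen.mem_nhds hx)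
    rw [laplacian_fun_sub (hvreg.contDiffAt (hΩopen.mem_nhds hx)) (hu.pow k), hvharm x hx]
    linarith [laplacian_pow_nonneg_of_even hu (huharm x hx) hk]
  intro x hx
  refine sub_nonneg.1 (nonneg_of_laplacian_nonpos hn hΩopen hΩbdd (hvcont.sub (hucont.pow k))
    (hvreg.sub (hureg.pow k)) hsuper (fun z hz => ?_) x hx)
  simp [hbd z hz]

end MinimumPrinciple

theorem stmt_1_general {n : ℕ} (Ω : Set (EuclideanSpace ℝ (Fin n)))
    (hΩopen : IsOpen Ω) (hΩbdd : Bornology.IsBounded Ω)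
    (ν : EuclideanSpace ℝ (Fin n) → EuclideanSpace ℝ (Fin n))
    (hν_ext : ∀ x ∈ frontier Ω, ∃ ε > (0:ℝ), ∀ t ∈ Set.Ioo (0:ℝ) ε,
        x + t • ν x ∉ closure Ω ∧ x - t • ν x ∈ Ω)
    (m : ℕ) (hm : 1 ≤ m)
    (f u v : EuclideanSpace ℝ (Fin n) → ℝ)
    (hucont : ContinuousOn u (closure Ω)) (hvcont : ContinuousOn v (closure Ω))
    (hureg : ContDiffOn ℝ 2 u Ω) (hvreg : ContDiffOn ℝ 2 v Ω)
    (huharm : ∀ x ∈ Ω, laplacian u x = 0) (hvharm : ∀ x ∈ Ω, laplacian v x = 0)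
    (hubd : ∀ x ∈ frontier Ω, u x = f x)
    (hvbd : ∀ x ∈ frontier Ω, v x = f x ^ (2 * m))
    (Du Dv : EuclideanSpace ℝ (Fin n) → ℝ)
    (hDu : ∀ x ∈ frontier Ω,
        HasDerivWithinAt (fun t : ℝ => u (x + t • ν x)) (Du x) (Set.Iic 0) 0)
    (hDv : ∀ x ∈ frontier Ω,
        HasDerivWithinAt (fun t : ℝ => v (x + t • ν x)) (Dv x) (Set.Iic 0) 0) :
    ∀ x ∈ frontier Ω, (1 / (2 * (m : ℝ))) * Dv x ≤ f x ^ (2 * m - 1) * Du x := by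
  intro x hx
  obtain ⟨ε, hε, hnormal⟩ := hν_ext x hx
  have hinside : ∀ t ∈ Ioo (-ε) 0, x + t • ν x ∈ Ω := fun t ht => by
    simpa [sub_eq_add_neg] using (hnormal (-t) ⟨by linarith [ht.2], by linarith [ht.1]⟩).2
  have hn : n ≠ 0 := by
    rintro rfl
    obtain ⟨hout, hin⟩ := hnormal (ε / 2) ⟨by linarith, by linarith⟩
    exact hout (Subsingleton.elim (x - (ε / 2) • ν x) (x + (ε / 2) • ν x) ▸ subset_closure hin)
  have hle := pow_le_of_laplacian_eq_zero hn hΩopen hΩbdd (even_two_mul m) hucont hvcont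
    hureg hvreg huharm hvharm fun z hz => by rw [hvbd z hz, hubd z hz]
  have hmin : IsLocalMinOn (fun t : ℝ => v (x + t • ν x) - u (x + t • ν x) ^ (2 * m))
      (Iic 0) 0 := by
    filter_upwards [Ioc_mem_nhdsLE (show -ε < 0 by linarith)] with t ht
    rcases ht.2.eq_or_lt with rfl | hlt
    · exact le_rfl
    · simpa [hvbd x hx, hubd x hx] using hle _ (hinside t ⟨ht.1, hlt⟩)
  have hderiv := hmin.hasDerivWithinAt_Iic_nonpos ((hDv x hx).sub ((hDu x hx).pow (2 * m)))
  simp only [zero_smul, add_zero, hubd x hx] at hderiv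
  have hm' : (0 : ℝ) < 2 * m := by positivity
  rw [one_div, inv_mul_le_iff₀ hm']
  push_cast at hderiv
  linarith

/-- Let `Ω ⊆ ℝⁿ` be a bounded domain with `C²` boundary (encoded through its
exterior unit normal `ν` and the interior-ball condition), and let `𝒟` denote the
Dirichlet–Neumann operator of `Ω`: for a smooth boundary datum `g`, `𝒟g = ∂w/∂ν` on `∂Ω`,
where `w` is the harmonic extension of `g` to `Ω` (harmonic in `Ω`, continuous up to `∂Ω`,
equal to `g` on `∂Ω`) and `ν` is the exterior unit normal.  Here `u` is the harmonic extension
of `f` with exterior normal derivative `Du = 𝒟f`, and `v` is the harmonic extension of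
`f^{2m}` with exterior normal derivative `Dv = 𝒟(f^{2m})`.  Then for every integer `m ≥ 1`
the pointwise inequality `(1/(2m)) 𝒟(f^{2m})(x) ≤ f(x)^{2m−1} · 𝒟f(x)` holds on `∂Ω`. -/
theorem stmt_1 {n : ℕ} (Ω : Set (EuclideanSpace ℝ (Fin n)))
    (hΩopen : IsOpen Ω) (hΩbdd : Bornology.IsBounded Ω)
    (ν : EuclideanSpace ℝ (Fin n) → EuclideanSpace ℝ (Fin n))
    (hν_unit : ∀ x ∈ frontier Ω, ‖ν x‖ = 1)
    (hν_ext : ∀ x ∈ frontier Ω, ∃ ε > (0:ℝ), ∀ t ∈ Set.Ioo (0:ℝ) ε,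
        x + t • ν x ∉ closure Ω ∧ x - t • ν x ∈ Ω)
    (hball : ∀ x ∈ frontier Ω, ∃ r > (0:ℝ), Metric.ball (x - r • ν x) r ⊆ Ω)
    (m : ℕ) (hm : 1 ≤ m)
    (f u v : EuclideanSpace ℝ (Fin n) → ℝ)
    (hf : ContinuousOn f (frontier Ω))
    (hucont : ContinuousOn u (closure Ω)) (hvcont : ContinuousOn v (closure Ω))
    (hureg : ContDiffOn ℝ 2 u Ω) (hvreg : ContDiffOn ℝ 2 v Ω)
    (huharm : ∀ x ∈ Ω, laplacian u x = 0) (hvharm : ∀ x ∈ Ω, laplacian v x = 0)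
    (hubd : ∀ x ∈ frontier Ω, u x = f x)
    (hvbd : ∀ x ∈ frontier Ω, v x = f x ^ (2 * m))
    (Du Dv : EuclideanSpace ℝ (Fin n) → ℝ)
    (hDu : ∀ x ∈ frontier Ω,
        HasDerivWithinAt (fun t : ℝ => u (x + t • ν x)) (Du x) (Set.Iic 0) 0)
    (hDv : ∀ x ∈ frontier Ω,
        HasDerivWithinAt (fun t : ℝ => v (x + t • ν x)) (Dv x) (Set.Iic 0) 0) :
    ∀ x ∈ frontier Ω, (1 / (2 * (m : ℝ))) * Dv x ≤ f x ^ (2 * m - 1) * Du x :=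
  stmt_1_general Ω hΩopen hΩbdd ν hν_ext m hm f u v hucont hvcont hureg hvreg huharm hvharm hubd
    hvbd Du Dv hDu hDv
end

section
/- Let 0 < α < 2 and let Λ^α = (−Δ)^{α/2} on ℝⁿ, given for Schwartz functions θ by Λ^α θ(x) = c_{n,α} ∫_{ℝⁿ} (θ(x) − θ(y))/|x − y|^{n+α} dy with c_{n,α} > 0 (the integral taken in the principal-value sense). Then for every convex function φ ∈ C¹(ℝ) and every f in the Schwartz class 𝒮(ℝⁿ), the pointwise inequality Λ^α(φ(f))(x) ≤ φ′(f(x)) · Λ^α f(x) holds for all x ∈ ℝⁿ (whenever Λ^α(φ(f)) is defined, e.g. φ(0)=0 or the integral converges). -/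
/-! Convexity gives the tangent-line inequality `φ a - φ b ≤ φ' a * (a - b)`. Taking `a = f x`,
`b = f y` and integrating against the positive kernel `‖x - y‖ ^ (-(n + α))` over
`{y | ε ≤ ‖x - y‖}` (where every integrand is integrable, since `f` and `φ ∘ f` are bounded and
`n + α > n`) compares the truncated integrals, and the comparison survives the limit `ε → 0`. -/

open MeasureTheory Set Module Topology

lemma ConvexOn.sub_le_deriv_mul_sub {S : Set ℝ} {φ : ℝ → ℝ} {a b : ℝ}
    (hφ : ConvexOn ℝ S φ) (ha : a ∈ S) (hb : b ∈ S) (hd : DifferentiableAt ℝ φ a) :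
    φ a - φ b ≤ deriv φ a * (a - b) := by
  rcases lt_trichotomy a b with hab | rfl | hab
  · have h := hφ.deriv_le_slope ha hb hab hd
    rw [slope_def_field, le_div_iff₀ (sub_pos.mpr hab)] at h
    linarith
  · simp
  · have h := hφ.slope_le_deriv hb ha hab hd
    rw [slope_def_field, div_le_iff₀ (sub_pos.mpr hab)] at h
    linarith

lemma Real.rpow_neg_le_mul_one_add_rpow_neg {ε t r : ℝ} (hε : 0 < ε) (hεt : ε ≤ t)
    (hr : 0 ≤ r) : t ^ (-r) ≤ (1 + ε⁻¹) ^ r * (1 + t) ^ (-r) := by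
  have ht : 0 < t := hε.trans_le hεt
  have hratio : (1 + t) / t ≤ 1 + ε⁻¹ := by
    rw [add_div, div_self ht.ne', one_div]
    linarith [inv_anti₀ hε hεt]
  calc t ^ (-r) = ((1 + t) / t) ^ r * (1 + t) ^ (-r) := by
        rw [Real.div_rpow (by positivity) ht.le, Real.rpow_neg ht.le,
          Real.rpow_neg (by positivity : (0 : ℝ) ≤ 1 + t)]
        field_simp
    _ ≤ (1 + ε⁻¹) ^ r * (1 + t) ^ (-r) := by gcongr

noncomputable def truncatedSingularIntegral {E : Type*} [NormedAddCommGroup E]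
    [MeasurableSpace E] (μ : Measure E) (s : ℝ) (g : E → ℝ) (x : E) (ε : ℝ) : ℝ :=
  ∫ y in {y | ε ≤ ‖x - y‖}, (g x - g y) / ‖x - y‖ ^ s ∂μ

lemma measurableSet_le_norm_sub {E : Type*} [NormedAddCommGroup E] [MeasurableSpace E]
    [OpensMeasurableSpace E] (x : E) (ε : ℝ) : MeasurableSet {y : E | ε ≤ ‖x - y‖} :=
  (isClosed_le continuous_const (by fun_prop)).measurableSet

section SingularIntegral

variable {E : Type*} [NormedAddCommGroup E] [NormedSpace ℝ E] [FiniteDimensional ℝ E]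
  [MeasurableSpace E] [BorelSpace E] {μ : Measure E} [μ.IsAddHaarMeasure]
  {s ε : ℝ} {x : E}

lemma integrableOn_norm_sub_rpow_neg (hs : finrank ℝ E < s) (x : E) (hε : 0 < ε) :
    IntegrableOn (fun y ↦ ‖x - y‖ ^ (-s)) {y | ε ≤ ‖x - y‖} μ := by
  have hs0 : 0 ≤ s := (Nat.cast_nonneg _).trans hs.le
  have hdom : Integrable (fun y ↦ (1 + ε⁻¹) ^ s * (1 + ‖x - y‖) ^ (-s)) μ :=
    ((integrable_one_add_norm hs).comp_sub_left x).const_mul _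
  refine hdom.integrableOn.mono'
    ((measurable_const.sub measurable_id).norm.pow_const _).aestronglyMeasurable ?_
  filter_upwards [ae_restrict_mem (measurableSet_le_norm_sub x ε)] with y hy
  rw [Real.norm_of_nonneg (by positivity)]
  exact Real.rpow_neg_le_mul_one_add_rpow_neg hε hy hs0

lemma integrableOn_sub_div_norm_sub_rpow {g : E → ℝ} {C : ℝ} (hg : Measurable g)
    (hC : ∀ y, |g y| ≤ C) (hs : finrank ℝ E < s) (x : E) (hε : 0 < ε) :
    IntegrableOn (fun y ↦ (g x - g y) / ‖x - y‖ ^ s) {y | ε ≤ ‖x - y‖} μ := by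
  have hdiff : ∀ y, ‖g x - g y‖ ≤ |g x| + C := fun y ↦ (abs_sub _ _).trans (by linarith [hC y])
  have := (integrableOn_norm_sub_rpow_neg (μ := μ) hs x hε).bdd_mul
    (measurable_const.sub hg).aestronglyMeasurable (Filter.Eventually.of_forall hdiff)
  refine IntegrableOn.congr_fun this (fun y _ ↦ ?_) (measurableSet_le_norm_sub x ε)
  simp only [Real.rpow_neg (norm_nonneg _), div_eq_mul_inv, Pi.sub_apply]

lemma ConvexOn.truncatedSingularIntegral_comp_le {φ : ℝ → ℝ} {g : E → ℝ} {C : ℝ}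
    (hφ : ConvexOn ℝ univ φ) (hd : DifferentiableAt ℝ φ (g x)) (hg : Measurable g)
    (hC : ∀ y, |g y| ≤ C) (hs : finrank ℝ E < s) (hε : 0 < ε) :
    truncatedSingularIntegral μ s (φ ∘ g) x ε ≤
      deriv φ (g x) * truncatedSingularIntegral μ s g x ε := by
  have hφc : Continuous φ := continuousOn_univ.mp (hφ.continuousOn isOpen_univ)
  obtain ⟨M, hM⟩ := isCompact_Icc.exists_bound_of_continuousOn (hφc.continuousOn (s := Icc (-C) C))
  have hIφ := integrableOn_sub_div_norm_sub_rpow (μ := μ) (hφc.measurable.comp hg)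
    (fun y ↦ hM (g y) (abs_le.mp (hC y))) hs x hε
  have hIg := integrableOn_sub_div_norm_sub_rpow (μ := μ) hg hC hs x hε
  rw [truncatedSingularIntegral, truncatedSingularIntegral, ← integral_const_mul]
  refine setIntegral_mono_on hIφ (hIg.const_mul _) (measurableSet_le_norm_sub x ε) fun y _ ↦ ?_
  rw [mul_div_assoc']
  gcongr
  exact hφ.sub_le_deriv_mul_sub trivial trivial hd

theorem ConvexOn.le_deriv_mul_of_tendsto_truncatedSingularIntegral {φ : ℝ → ℝ} {g : E → ℝ}
    {C L Lφ : ℝ} (hφ : ConvexOn ℝ univ φ) (hd : DifferentiableAt ℝ φ (g x)) (hg : Measurable g)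
    (hC : ∀ y, |g y| ≤ C) (hs : finrank ℝ E < s)
    (hL : Filter.Tendsto (truncatedSingularIntegral μ s g x) (𝓝[>] 0) (𝓝 L))
    (hLφ : Filter.Tendsto (truncatedSingularIntegral μ s (φ ∘ g) x) (𝓝[>] 0) (𝓝 Lφ)) :
    Lφ ≤ deriv φ (g x) * L :=
  le_of_tendsto_of_tendsto hLφ (hL.const_mul _) <| eventually_mem_nhdsWithin.mono
    fun _ hε ↦ hφ.truncatedSingularIntegral_comp_le hd hg hC hs hε

end SingularIntegral

theorem stmt_2_general {n : ℕ} (α : ℝ) (hα : 0 < α) (c : ℝ) (hc : 0 < c)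
    (φ : ℝ → ℝ) (hφconv : ConvexOn ℝ Set.univ φ) (hφC1 : ContDiff ℝ 1 φ)
    (f : SchwartzMap (EuclideanSpace ℝ (Fin n)) ℝ) (x : EuclideanSpace ℝ (Fin n))
    (Lf Lφf : ℝ)
    (hLf : Filter.Tendsto
        (fun ε : ℝ => ∫ y in {y : EuclideanSpace ℝ (Fin n) | ε ≤ ‖x - y‖},
          (f x - f y) / ‖x - y‖ ^ ((n : ℝ) + α))
        (nhdsWithin 0 (Set.Ioi 0)) (nhds Lf))
    (hLφf : Filter.Tendsto
        (fun ε : ℝ => ∫ y in {y : EuclideanSpace ℝ (Fin n) | ε ≤ ‖x - y‖},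
          (φ (f x) - φ (f y)) / ‖x - y‖ ^ ((n : ℝ) + α))
        (nhdsWithin 0 (Set.Ioi 0)) (nhds Lφf)) :
    c * Lφf ≤ deriv φ (f x) * (c * Lf) := by
  have hbound (y : EuclideanSpace ℝ (Fin n)) : |f y| ≤ ‖f.toBoundedContinuousFunction‖ :=
    f.toBoundedContinuousFunction.norm_coe_le_norm y
  have hs : (finrank ℝ (EuclideanSpace ℝ (Fin n)) : ℝ) < n + α := by
    rw [finrank_euclideanSpace_fin]
    linarith
  have hmain := hφconv.le_deriv_mul_of_tendsto_truncatedSingularIntegral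
    ((hφC1.differentiable one_ne_zero).differentiableAt) f.continuous.measurable hbound hs hLf hLφf
  calc c * Lφf ≤ c * (deriv φ (f x) * Lf) := mul_le_mul_of_nonneg_left hmain hc.le
    _ = deriv φ (f x) * (c * Lf) := by ring

/-- Let `0 < α < 2` and let `Λ^α = (−Δ)^{α/2}` on `ℝⁿ`, given for Schwartz
functions `θ` by the principal-value singular integral
`Λ^α θ(x) = c_{n,α} p.v.∫ (θ(x) − θ(y)) |x−y|^{−n−α} dy` with a constant `c_{n,α} > 0`.
The hypotheses `hLf`, `hLφf` say that the principal values defining `Λ^α f(x)` and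
`Λ^α(φ∘f)(x)` exist, with `Λ^α f(x) = c·Lf` and `Λ^α(φ∘f)(x) = c·Lφf`.  Then for every
convex `φ ∈ C¹(ℝ)` and every Schwartz `f`, the pointwise inequality
`Λ^α(φ(f))(x) ≤ φ′(f(x))·Λ^α f(x)` holds. -/
theorem stmt_2 {n : ℕ} (α : ℝ) (hα : 0 < α) (hα2 : α < 2) (c : ℝ) (hc : 0 < c)
    (φ : ℝ → ℝ) (hφconv : ConvexOn ℝ Set.univ φ) (hφC1 : ContDiff ℝ 1 φ)
    (f : SchwartzMap (EuclideanSpace ℝ (Fin n)) ℝ) (x : EuclideanSpace ℝ (Fin n))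
    (Lf Lφf : ℝ)
    (hLf : Filter.Tendsto
        (fun ε : ℝ => ∫ y in {y : EuclideanSpace ℝ (Fin n) | ε ≤ ‖x - y‖},
          (f x - f y) / ‖x - y‖ ^ ((n : ℝ) + α))
        (nhdsWithin 0 (Set.Ioi 0)) (nhds Lf))
    (hLφf : Filter.Tendsto
        (fun ε : ℝ => ∫ y in {y : EuclideanSpace ℝ (Fin n) | ε ≤ ‖x - y‖},
          (φ (f x) - φ (f y)) / ‖x - y‖ ^ ((n : ℝ) + α))
        (nhdsWithin 0 (Set.Ioi 0)) (nhds Lφf)) :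
    c * Lφf ≤ deriv φ (f x) * (c * Lf) :=
  stmt_2_general α hα c hc φ hφconv hφC1 f x Lf Lφf hLf hLφf
end

section
/- Let Ω ⊆ ℝⁿ be a bounded domain with C² boundary, f smooth on ∂Ω, m ≥ 1 an integer, and let u, v be the harmonic extensions of f and f^{2m} to Ω. Then at every boundary point x ∈ ∂Ω the exterior normal derivative of w = u^{2m} − v is nonnegative: ∂w/∂ν(x) ≥ 0, i.e. ∂v/∂ν(x) ≤ 2m f(x)^{2m−1} ∂u/∂ν(x); in other words 𝒟(f^{2m})(x) ≤ 2m f(x)^{2m−1} 𝒟f(x), where 𝒟 is the Dirichlet–Neumann operator of Ω. -/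
open MeasureTheory

open Set Filter Topology Module
open scoped Laplacian

/-!
Since `u` is harmonic, `Δ (u ^ 2m) = 2m (2m - 1) u ^ (2m - 2) |∇u|² ≥ 0`, so `w = u ^ 2m - v` is
subharmonic. It vanishes on `∂Ω`, so the weak maximum principle gives `w ≤ 0` on `Ω̄`; that
principle follows from the fact that the strictly subharmonic `w + ε |x|²` has no interior maximum.
Hence along the inward normal `t ↦ w (x + t ν)` (`t ≤ 0`) is maximal at `t = 0`, and its one-sided
derivative there, which is `2m f^(2m-1) 𝒟f - 𝒟(f^2m)`, is nonnegative.
-/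

theorem nontrivial_of_mem_frontier {X : Type*} [TopologicalSpace X] {s : Set X} {x : X}
    (hx : x ∈ frontier s) : Nontrivial X := by
  by_contra h
  rw [not_nontrivial_iff_subsingleton] at h
  have : frontier s = ∅ := Subsingleton.set_cases (p := fun s => frontier s = ∅)
    frontier_empty frontier_univ s
  exact this.subset hx

theorem deriv_deriv_nonpos_of_isLocalMax {g : ℝ → ℝ} {a : ℝ} (hc : ContinuousAt g a)
    (hmax : IsLocalMax g a) : deriv (deriv g) a ≤ 0 := by
  by_contra! hpos
  have hmin := isLocalMin_of_deriv_deriv_pos hpos hmax.deriv_eq_zero hc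
  have hconst : g =ᶠ[𝓝 a] fun _ => g a := by
    filter_upwards [hmax, hmin] with t h₁ h₂ using le_antisymm h₁ h₂
  simp only [hconst.deriv.deriv_eq, deriv_const', lt_self_iff_false] at hpos

theorem IsLocalMaxOn.nonneg_of_hasDerivWithinAt_Iic {g : ℝ → ℝ} {a d : ℝ}
    (hmax : IsLocalMaxOn g (Iic a) a) (hg : HasDerivWithinAt g d (Iic a) a) : 0 ≤ d := by
  have hcone : (-1 : ℝ) ∈ posTangentConeAt (Iic a) a :=
    mem_posTangentConeAt_of_segment_subset (by
      rw [segment_symm, segment_eq_Icc (by linarith)]; exact Icc_subset_Iic_self)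
  simpa using hmax.hasFDerivWithinAt_nonpos hg.hasFDerivWithinAt hcone

theorem deriv_deriv_pow {g : ℝ → ℝ} {a : ℝ} (hg : ContDiffAt ℝ 2 g a) (p : ℕ) :
    deriv (deriv fun t => g t ^ p) a =
      p * (p - 1) * g a ^ (p - 2) * deriv g a ^ 2 + p * g a ^ (p - 1) * deriv (deriv g) a := by
  have hderiv : deriv (fun t => g t ^ p) =ᶠ[𝓝 a] fun t => p * g t ^ (p - 1) * deriv g t := by
    filter_upwards [hg.eventually (by simp)] with t ht
    simpa using ((ht.differentiableAt two_ne_zero).hasDerivAt.fun_pow p).deriv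
  have hg' : HasDerivAt (deriv g) (deriv (deriv g) a) a :=
    ((hg.derivWithin (m := 1) (by norm_num)).differentiableAt one_ne_zero).hasDerivAt
  rw [hderiv.deriv_eq, ((((hg.differentiableAt two_ne_zero).hasDerivAt.fun_pow (p - 1)).const_mul
    (p : ℝ)).fun_mul hg').deriv]
  rcases p with _ | _ | p
  · simp
  · simp
  · simp [show p + 1 + 1 - 2 = p by omega]
    ring

section Laplacian

variable {E : Type*} [NormedAddCommGroup E] [InnerProductSpace ℝ E]

theorem iteratedFDeriv_two_apply_eq_deriv_deriv {F : Type*} [NormedAddCommGroup F]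
    [NormedSpace ℝ F] {f : E → F} {x : E} (hf : ContDiffAt ℝ 2 f x) (e : E) :
    iteratedFDeriv ℝ 2 f x ![e, e] = deriv (deriv fun t : ℝ => f (x + t • e)) 0 := by
  have hline : Tendsto (fun t : ℝ => x + t • e) (𝓝 0) (𝓝 x) :=
    Continuous.tendsto' (by fun_prop) 0 x (by simp)
  have hderiv : deriv (fun t : ℝ => f (x + t • e)) =ᶠ[𝓝 0]
      fun t => iteratedFDeriv ℝ 1 f (x + t • e) fun _ => e := by
    filter_upwards [hline.eventually (hf.eventually (by simp))] with t ht
    rw [(ht.differentiableAt two_ne_zero).deriv_comp_add_smul, iteratedFDeriv_one_apply]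
  rw [hderiv.deriv_eq, ContDiffAt.deriv_fderiv_add_smul (n := 1)
    (by simpa [one_add_one_eq_two] using hf), zero_smul, add_zero]
  congr
  ext i
  fin_cases i <;> rfl

variable [FiniteDimensional ℝ E]

theorem laplacian_eq_sum_deriv_deriv {F : Type*} [NormedAddCommGroup F] [NormedSpace ℝ F]
    {f : E → F} {x : E} (hf : ContDiffAt ℝ 2 f x) {ι : Type*} [Fintype ι]
    (v : OrthonormalBasis ι ℝ E) :
    Δ f x = ∑ i, deriv (deriv fun t : ℝ => f (x + t • v i)) 0 := by
  simp only [InnerProductSpace.laplacian_eq_iteratedFDeriv_orthonormalBasis f v,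
    iteratedFDeriv_two_apply_eq_deriv_deriv hf]

theorem laplacian_nonpos_of_isLocalMax {f : E → ℝ} {x : E} (hf : ContDiffAt ℝ 2 f x)
    (hmax : IsLocalMax f x) : Δ f x ≤ 0 := by
  rw [laplacian_eq_sum_deriv_deriv hf (stdOrthonormalBasis ℝ E)]
  refine Finset.sum_nonpos fun i _ => deriv_deriv_nonpos_of_isLocalMax ?_ ?_
  · exact hf.continuousAt.comp_of_eq (by fun_prop) (by simp)
  · exact IsLocalMax.comp_continuous (by simpa using hmax) (by fun_prop)

theorem laplacian_norm_sq_s14 (x : E) : Δ (fun y : E => ‖y‖ ^ 2) x = 2 * finrank ℝ E := by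
  rw [laplacian_eq_sum_deriv_deriv (contDiff_norm_sq ℝ).contDiffAt (stdOrthonormalBasis ℝ E)]
  have hline (e : E) (he : ‖e‖ = 1) :
      (fun t : ℝ => ‖x + t • e‖ ^ 2) = fun t => ‖x‖ ^ 2 + 2 * inner ℝ x e * t + t ^ 2 := by
    ext t
    rw [norm_add_sq_real, inner_smul_right, norm_smul, mul_pow, he, Real.norm_eq_abs, sq_abs]
    ring
  have hquad (b c : ℝ) : deriv (deriv fun t : ℝ => c + b * t + t ^ 2) 0 = 2 := by
    have h : deriv (fun t : ℝ => c + b * t + t ^ 2) = fun t => b + 2 * t := by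
      ext t
      simpa using
        ((((hasDerivAt_id' t).const_mul b).const_add c).fun_add (hasDerivAt_pow 2 t)).deriv
    simp [h]
  simp only [hline _ ((stdOrthonormalBasis ℝ E).norm_eq_one _), hquad]
  simp [mul_comm]

theorem laplacian_pow {u : E → ℝ} {x : E} (hu : ContDiffAt ℝ 2 u x) (p : ℕ) {ι : Type*}
    [Fintype ι] (v : OrthonormalBasis ι ℝ E) :
    Δ (fun y => u y ^ p) x =
      p * (p - 1) * u x ^ (p - 2) * ∑ i, fderiv ℝ u x (v i) ^ 2 + p * u x ^ (p - 1) * Δ u x := by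
  rw [laplacian_eq_sum_deriv_deriv (hu.pow p) v, laplacian_eq_sum_deriv_deriv hu v,
    Finset.mul_sum, Finset.mul_sum, ← Finset.sum_add_distrib]
  refine Finset.sum_congr rfl fun i _ => ?_
  have hu₀ : ContDiffAt ℝ 2 u (x + (0 : ℝ) • v i) := by simpa using hu
  rw [deriv_deriv_pow (g := fun t => u (x + t • v i)) (hu₀.comp 0 (by fun_prop)) p,
    (hu₀.differentiableAt two_ne_zero).deriv_comp_add_smul]
  simp

theorem laplacian_pow_nonneg_of_even_s14 {u : E → ℝ} {x : E} (hu : ContDiffAt ℝ 2 u x)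
    (hΔ : Δ u x = 0) {p : ℕ} (hp : Even p) : 0 ≤ Δ (fun y => u y ^ p) x := by
  rw [laplacian_pow hu p (stdOrthonormalBasis ℝ E), hΔ, mul_zero, add_zero]
  have hcoef : 0 ≤ (p : ℝ) * (p - 1) := by
    rcases p with _ | p
    · simp
    · simp only [Nat.cast_add_one, add_sub_cancel_right]; positivity
  have hpow : 0 ≤ u x ^ (p - 2) := (hp.tsub even_two).pow_nonneg _
  have hsum : 0 ≤ ∑ i, fderiv ℝ u x (stdOrthonormalBasis ℝ E i) ^ 2 :=
    Finset.sum_nonneg fun i _ => sq_nonneg _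
  exact mul_nonneg (mul_nonneg hcoef hpow) hsum

theorem exists_mem_frontier_isMaxOn_of_laplacian_pos {Ω : Set E} {F : E → ℝ} (hΩ : IsOpen Ω)
    (hΩb : Bornology.IsBounded Ω) (hne : Ω.Nonempty) (hcont : ContinuousOn F (closure Ω))
    (hreg : ContDiffOn ℝ 2 F Ω) (hpos : ∀ z ∈ Ω, 0 < Δ F z) :
    ∃ z ∈ frontier Ω, IsMaxOn F (closure Ω) z := by
  obtain ⟨z, hz, hmax⟩ := hΩb.isCompact_closure.exists_isMaxOn hne.closure hcont
  refine ⟨z, ?_, hmax⟩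
  rw [hΩ.frontier_eq]
  refine ⟨hz, fun hzΩ => (hpos z hzΩ).not_ge ?_⟩
  exact laplacian_nonpos_of_isLocalMax (hreg.contDiffAt (hΩ.mem_nhds hzΩ))
    (hmax.isLocalMax (mem_of_superset (hΩ.mem_nhds hzΩ) subset_closure))

theorem nonpos_of_laplacian_nonneg [Nontrivial E] {Ω : Set E} {w : E → ℝ} (hΩ : IsOpen Ω)
    (hΩb : Bornology.IsBounded Ω) (hcont : ContinuousOn w (closure Ω))
    (hreg : ContDiffOn ℝ 2 w Ω) (hsub : ∀ z ∈ Ω, 0 ≤ Δ w z)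
    (hbd : ∀ z ∈ frontier Ω, w z ≤ 0) {y : E} (hy : y ∈ closure Ω) : w y ≤ 0 := by
  obtain ⟨R, hR⟩ := hΩb.closure.subset_closedBall 0
  refine le_of_forall_pos_le_add fun δ hδ => ?_
  -- `ε` is chosen so that `ε ‖z‖² ≤ δ` on `closure Ω ⊆ closedBall 0 R`
  set ε := δ / (R ^ 2 + 1) with hε_def
  have hε : 0 < ε := by positivity
  have hquad : ContDiff ℝ 2 fun z : E => ε * ‖z‖ ^ 2 := (contDiff_norm_sq ℝ).const_smul ε
  have hΔ (z : E) (hz : z ∈ Ω) :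
      Δ (fun z => w z + ε * ‖z‖ ^ 2) z = Δ w z + ε * (2 * finrank ℝ E) := by
    rw [show (fun z => w z + ε * ‖z‖ ^ 2) = w + fun z => ε * ‖z‖ ^ 2 from rfl,
      (hreg.contDiffAt (hΩ.mem_nhds hz)).laplacian_add hquad.contDiffAt,
      ← laplacian_norm_sq_s14 z, ← smul_eq_mul,
      ← InnerProductSpace.laplacian_smul _ (contDiff_norm_sq ℝ).contDiffAt]
    rfl
  obtain ⟨z, hz, hmax⟩ := exists_mem_frontier_isMaxOn_of_laplacian_pos
    (F := fun z => w z + ε * ‖z‖ ^ 2) hΩ hΩb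
    (closure_nonempty_iff.mp ⟨y, hy⟩) (hcont.add hquad.continuous.continuousOn)
    (hreg.add hquad.contDiffOn) fun z hz => by
      rw [hΔ z hz]
      have := hsub z hz
      have : (0 : ℝ) < finrank ℝ E := by exact_mod_cast finrank_pos
      positivity
  have hzR : ‖z‖ ^ 2 ≤ R ^ 2 + 1 := by
    have := mem_closedBall_zero_iff.mp (hR (frontier_subset_closure hz))
    nlinarith [norm_nonneg z]
  calc w y ≤ w y + ε * ‖y‖ ^ 2 := le_add_of_nonneg_right (by positivity)
    _ ≤ w z + ε * ‖z‖ ^ 2 := hmax hy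
    _ ≤ 0 + ε * (R ^ 2 + 1) := add_le_add (hbd z hz) (by gcongr)
    _ = 0 + δ := by rw [hε_def, div_mul_cancel₀ _ (by positivity)]

end Laplacian

theorem eventually_nhdsLE_add_smul_mem_closure {E : Type*} [NormedAddCommGroup E]
    [NormedSpace ℝ E] {Ω : Set E} {x e : E} {ε : ℝ} (hε : 0 < ε) (hx : x ∈ closure Ω)
    (hinward : ∀ t ∈ Ioo 0 ε, x - t • e ∈ Ω) : ∀ᶠ t in 𝓝[≤] (0 : ℝ), x + t • e ∈ closure Ω := by
  filter_upwards [Ioc_mem_nhdsLE (neg_lt_zero.mpr hε)] with t ht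
  rcases ht.2.eq_or_lt with rfl | hneg
  · simpa using hx
  · have := hinward (-t) ⟨neg_pos.mpr hneg, by linarith [ht.1]⟩
    rw [neg_smul, sub_neg_eq_add] at this
    exact subset_closure this

theorem laplacian_eq_innerProductSpace_laplacian {n : ℕ} (f : EuclideanSpace ℝ (Fin n) → ℝ) :
    laplacian f = Δ f := by
  ext x
  simp [laplacian, InnerProductSpace.laplacian_eq_iteratedFDeriv_orthonormalBasis f
    (EuclideanSpace.basisFun (Fin n) ℝ)]

theorem stmt_14_general {n : ℕ} (Ω : Set (EuclideanSpace ℝ (Fin n)))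
    (hΩopen : IsOpen Ω) (hΩbdd : Bornology.IsBounded Ω)
    (ν : EuclideanSpace ℝ (Fin n) → EuclideanSpace ℝ (Fin n))
    (hν_ext : ∀ x ∈ frontier Ω, ∃ ε > (0:ℝ), ∀ t ∈ Set.Ioo (0:ℝ) ε,
        x + t • ν x ∉ closure Ω ∧ x - t • ν x ∈ Ω)
    (m : ℕ)
    (f u v : EuclideanSpace ℝ (Fin n) → ℝ)
    (hucont : ContinuousOn u (closure Ω)) (hvcont : ContinuousOn v (closure Ω))
    (hureg : ContDiffOn ℝ 2 u Ω) (hvreg : ContDiffOn ℝ 2 v Ω)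
    (huharm : ∀ x ∈ Ω, laplacian u x = 0) (hvharm : ∀ x ∈ Ω, laplacian v x = 0)
    (hubd : ∀ x ∈ frontier Ω, u x = f x)
    (hvbd : ∀ x ∈ frontier Ω, v x = f x ^ (2 * m))
    (Du Dv : EuclideanSpace ℝ (Fin n) → ℝ)
    (hDu : ∀ x ∈ frontier Ω,
        HasDerivWithinAt (fun t : ℝ => u (x + t • ν x)) (Du x) (Set.Iic 0) 0)
    (hDv : ∀ x ∈ frontier Ω,
        HasDerivWithinAt (fun t : ℝ => v (x + t • ν x)) (Dv x) (Set.Iic 0) 0) :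
    ∀ x ∈ frontier Ω,
      0 ≤ (2 * (m : ℝ)) * f x ^ (2 * m - 1) * Du x - Dv x ∧
      Dv x ≤ (2 * (m : ℝ)) * f x ^ (2 * m - 1) * Du x := by
  intro x hx
  have : Nontrivial (EuclideanSpace ℝ (Fin n)) := nontrivial_of_mem_frontier hx
  simp only [laplacian_eq_innerProductSpace_laplacian] at huharm hvharm
  have hsub (z : EuclideanSpace ℝ (Fin n)) (hz : z ∈ Ω) :
      0 ≤ Δ (fun y => u y ^ (2 * m) - v y) z := by
    have hu := hureg.contDiffAt (hΩopen.mem_nhds hz)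
    have hv := hvreg.contDiffAt (hΩopen.mem_nhds hz)
    rw [show (fun y => u y ^ (2 * m) - v y) = (fun y => u y ^ (2 * m)) - v from rfl,
      (hu.pow _).laplacian_sub hv, hvharm z hz, sub_zero]
    exact laplacian_pow_nonneg_of_even_s14 hu (huharm z hz) (even_two_mul m)
  have hw (y) (hy : y ∈ closure Ω) : u y ^ (2 * m) - v y ≤ 0 :=
    nonpos_of_laplacian_nonneg hΩopen hΩbdd ((hucont.pow _).sub hvcont)
      ((hureg.pow _).sub hvreg) hsub (fun z hz => by simp [hubd z hz, hvbd z hz]) hy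
  obtain ⟨ε, hε, hinward⟩ := hν_ext x hx
  have hmax : IsLocalMaxOn (fun t : ℝ => u (x + t • ν x) ^ (2 * m) - v (x + t • ν x))
      (Iic 0) 0 := by
    filter_upwards [eventually_nhdsLE_add_smul_mem_closure hε (frontier_subset_closure hx)
      fun t ht => (hinward t ht).2] with t ht
    simpa [hubd x hx, hvbd x hx] using hw _ ht
  have hnonneg := hmax.nonneg_of_hasDerivWithinAt_Iic
    (((hDu x hx).fun_pow (2 * m)).fun_sub (hDv x hx))
  simp only [zero_smul, add_zero, hubd x hx] at hnonneg
  push_cast at hnonneg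
  constructor <;> linarith

/-- Let `Ω ⊆ ℝⁿ` be a bounded domain with `C²` boundary (encoded through its
exterior unit normal `ν` and the interior-ball condition), `f` smooth on `∂Ω`, `m ≥ 1` an
integer, and let `u`, `v` be the harmonic extensions of `f` and `f^{2m}` to `Ω`.  `Du` and `Dv`
denote the exterior normal derivatives `∂u/∂ν`, `∂v/∂ν` on `∂Ω`, i.e. the values of the
Dirichlet-to-Neumann operator `𝒟f` and `𝒟(f^{2m})`.  Then at every boundary point the exterior
normal derivative of `w = u^{2m} − v` is nonnegative: `∂w/∂ν ≥ 0`, i.e.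
`𝒟(f^{2m})(x) = ∂v/∂ν(x) ≤ 2m f(x)^{2m−1} ∂u/∂ν(x) = 2m f(x)^{2m−1} 𝒟f(x)`. -/
theorem stmt_14 {n : ℕ} (Ω : Set (EuclideanSpace ℝ (Fin n)))
    (hΩopen : IsOpen Ω) (hΩbdd : Bornology.IsBounded Ω)
    (ν : EuclideanSpace ℝ (Fin n) → EuclideanSpace ℝ (Fin n))
    (hν_unit : ∀ x ∈ frontier Ω, ‖ν x‖ = 1)
    (hν_ext : ∀ x ∈ frontier Ω, ∃ ε > (0:ℝ), ∀ t ∈ Set.Ioo (0:ℝ) ε,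
        x + t • ν x ∉ closure Ω ∧ x - t • ν x ∈ Ω)
    (hball : ∀ x ∈ frontier Ω, ∃ r > (0:ℝ), Metric.ball (x - r • ν x) r ⊆ Ω)
    (m : ℕ) (hm : 1 ≤ m)
    (f u v : EuclideanSpace ℝ (Fin n) → ℝ)
    (hf : ContinuousOn f (frontier Ω))
    (hucont : ContinuousOn u (closure Ω)) (hvcont : ContinuousOn v (closure Ω))
    (hureg : ContDiffOn ℝ 2 u Ω) (hvreg : ContDiffOn ℝ 2 v Ω)
    (huharm : ∀ x ∈ Ω, laplacian u x = 0) (hvharm : ∀ x ∈ Ω, laplacian v x = 0)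
    (hubd : ∀ x ∈ frontier Ω, u x = f x)
    (hvbd : ∀ x ∈ frontier Ω, v x = f x ^ (2 * m))
    (Du Dv : EuclideanSpace ℝ (Fin n) → ℝ)
    (hDu : ∀ x ∈ frontier Ω,
        HasDerivWithinAt (fun t : ℝ => u (x + t • ν x)) (Du x) (Set.Iic 0) 0)
    (hDv : ∀ x ∈ frontier Ω,
        HasDerivWithinAt (fun t : ℝ => v (x + t • ν x)) (Dv x) (Set.Iic 0) 0) :
    ∀ x ∈ frontier Ω,
      0 ≤ (2 * (m : ℝ)) * f x ^ (2 * m - 1) * Du x - Dv x ∧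
      Dv x ≤ (2 * (m : ℝ)) * f x ^ (2 * m - 1) * Du x :=
  stmt_14_general Ω hΩopen hΩbdd ν hν_ext m f u v hucont hvcont hureg hvreg huharm hvharm hubd hvbd
    Du Dv hDu hDv
end
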